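/- Under the hypotheses of the previous setting but with 0 < ε < ω (ε-systolic expansion of D_1, ω-bounded γ_1), for every w ∈ (L' \ {0}) + im ∂^C_2 and every u ∈ D_1 \ ker ∂^D_1: ‖w + (γ_1 + ∂^D_1)u‖ ≥ (ε/ω) · d_X(C). Hence d_X(tot E) ≥ min(1, ε/ω) · d_X(C) in general. -/

import Mathlib

open Matrix
open scoped ENNReal NNReal

/-!
Let `w` be a 1-cycle of `C` that stays nontrivial modulo `γ₁(ker ∂^D₁) + im ∂^C₂`, and let
`∂^D₁ u ≠ 0`. Choose `z ∈ ker ∂^D₁` with `‖u + z‖` minimal, so that `ε ‖u + z‖ ≤ ‖∂^D₁ u‖` by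
systolic expansion. Then `w - γ₁ z` is a nontrivial cycle of `C`, and
`‖w - γ₁ z‖ ≤ ‖w + γ₁ u‖ + ‖γ₁ (u + z)‖ ≤ ‖w + γ₁ u‖ + (ω / ε) ‖∂^D₁ u‖`,
which for `ε ≤ ω` gives `(ε / ω) d_X(C) ≤ ‖∂^D₁ u‖ + ‖w + γ₁ u‖`.

A nontrivial 1-cycle `(p₁, p₂)` of the total complex either has `p₁ = 0`, and then `p₂` is a
nontrivial cycle of `C`, or `p₁ = ∂^D₁ u ≠ 0`, and the bound applies to `w = p₂ + γ₁ u`, for which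
`w + γ₁ u = p₂` over `𝔽₂`.
-/

section

variable {R : Type*} [Ring R] [DecidableEq R]
  {D₀ D₁ C₀ C₁ C₂ : Type*} [Fintype D₀] [Fintype D₁] [Fintype C₁] [Fintype C₂]

/-- The distance `d_X(C)`. -/
noncomputable def systole (dC1 : Matrix C₀ C₁ R) (dC2 : Matrix C₁ C₂ R) : ℝ≥0∞ :=
  sInf ((fun v => (hammingNorm v : ℝ≥0∞)) '' {v | dC1 *ᵥ v = 0 ∧ ¬∃ x, dC2 *ᵥ x = v})

theorem systole_le {dC1 : Matrix C₀ C₁ R} {dC2 : Matrix C₁ C₂ R} {v : C₁ → R}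
    (hv : dC1 *ᵥ v = 0) (hnt : ¬∃ x, dC2 *ᵥ x = v) : systole dC1 dC2 ≤ hammingNorm v :=
  sInf_le ⟨v, ⟨hv, hnt⟩, rfl⟩

theorem hammingNorm_sub_le {ι : Type*} [Fintype ι] (a b : ι → R) :
    hammingNorm (a - b) ≤ hammingNorm a + hammingNorm b := by
  have h := hammingDist_triangle b 0 a
  rwa [hammingDist_eq_hammingNorm, neg_add_eq_sub, hammingDist_zero_right, hammingDist_zero_left,
    add_comm] at h

theorem exists_mulVec_eq_zero_hammingNorm_add_eq_sInf {m n : Type*} [Fintype n]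
    (A : Matrix m n R) (u : n → R) :
    ∃ z, A *ᵥ z = 0 ∧
      hammingNorm (u + z) = sInf {k : ℕ | ∃ z, A *ᵥ z = 0 ∧ hammingNorm (u + z) = k} :=
  Nat.sInf_mem (s := {k : ℕ | ∃ z, A *ᵥ z = 0 ∧ hammingNorm (u + z) = k}) ⟨_, 0, by simp, rfl⟩

variable {dD1 : Matrix D₀ D₁ R} {dC1 : Matrix C₀ C₁ R} {dC2 : Matrix C₁ C₂ R}
  {γ1 : Matrix C₁ D₁ R} {ε ω : ℝ≥0}

theorem exists_mulVec_eq_zero_mul_hammingNorm_le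
    (hbγ1 : ∀ x, (hammingNorm (γ1 *ᵥ x) : ℝ≥0) ≤ ω * hammingNorm x)
    (hexp : ∀ u, dD1 *ᵥ u ≠ 0 →
        ε * ((sInf {k : ℕ | ∃ z, dD1 *ᵥ z = 0 ∧ hammingNorm (u + z) = k} : ℕ) : ℝ≥0) ≤
          (hammingNorm (dD1 *ᵥ u) : ℝ≥0))
    (hεω : ε ≤ ω) (w : C₁ → R) {u : D₁ → R} (hu : dD1 *ᵥ u ≠ 0) :
    ∃ z, dD1 *ᵥ z = 0 ∧ ε * hammingNorm (w + γ1 *ᵥ z) ≤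
      ω * (hammingNorm (dD1 *ᵥ u) + hammingNorm (w + γ1 *ᵥ u)) := by
  obtain ⟨z, hz, hmin⟩ := exists_mulVec_eq_zero_hammingNorm_add_eq_sInf dD1 u
  refine ⟨-z, by rw [mulVec_neg, hz, neg_zero], ?_⟩
  have hsplit : w + γ1 *ᵥ -z = (w + γ1 *ᵥ u) - γ1 *ᵥ (u + z) := by
    rw [mulVec_neg, mulVec_add]; abel
  have hγz : (hammingNorm (γ1 *ᵥ (u + z)) : ℝ≥0) ≤
      ω * ((sInf {k : ℕ | ∃ z, dD1 *ᵥ z = 0 ∧ hammingNorm (u + z) = k} : ℕ) : ℝ≥0) :=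
    hmin ▸ hbγ1 (u + z)
  calc ε * (hammingNorm (w + γ1 *ᵥ -z) : ℝ≥0)
      ≤ ε * (hammingNorm (w + γ1 *ᵥ u) + hammingNorm (γ1 *ᵥ (u + z))) := by
        rw [hsplit]; gcongr; exact_mod_cast hammingNorm_sub_le _ _
    _ ≤ ω * hammingNorm (w + γ1 *ᵥ u) +
          ω * (ε * ((sInf {k : ℕ | ∃ z, dD1 *ᵥ z = 0 ∧ hammingNorm (u + z) = k} : ℕ) : ℝ≥0)) := by
        rw [mul_add, mul_left_comm ω]; gcongr
    _ ≤ ω * (hammingNorm (dD1 *ᵥ u) + hammingNorm (w + γ1 *ᵥ u)) := by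
        rw [mul_add ω, add_comm (ω * _)]; gcongr; exact hexp u hu

theorem div_mul_systole_le {γ0 : Matrix C₀ D₀ R} (hγ0 : γ0 * dD1 = dC1 * γ1)
    (hbγ1 : ∀ x, (hammingNorm (γ1 *ᵥ x) : ℝ≥0) ≤ ω * hammingNorm x)
    (hexp : ∀ u, dD1 *ᵥ u ≠ 0 →
        ε * ((sInf {k : ℕ | ∃ z, dD1 *ᵥ z = 0 ∧ hammingNorm (u + z) = k} : ℕ) : ℝ≥0) ≤
          (hammingNorm (dD1 *ᵥ u) : ℝ≥0))
    (hω : 0 < ω) (hεω : ε ≤ ω) {w : C₁ → R} (hw : dC1 *ᵥ w = 0)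
    (hnt : ∀ z, dD1 *ᵥ z = 0 → ∀ x, w + γ1 *ᵥ z ≠ dC2 *ᵥ x) {u : D₁ → R} (hu : dD1 *ᵥ u ≠ 0) :
    ((ε / ω : ℝ≥0) : ℝ≥0∞) * systole dC1 dC2 ≤
      ((hammingNorm (dD1 *ᵥ u) + hammingNorm (w + γ1 *ᵥ u) : ℕ) : ℝ≥0∞) := by
  obtain ⟨z, hz, hle⟩ := exists_mulVec_eq_zero_mul_hammingNorm_le hbγ1 hexp hεω w hu
  have hcycle : dC1 *ᵥ (w + γ1 *ᵥ z) = 0 := by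
    rw [mulVec_add, hw, mulVec_mulVec, ← hγ0, ← mulVec_mulVec, hz, mulVec_zero, zero_add]
  have hsys := systole_le hcycle fun ⟨x, hx⟩ => hnt z hz x hx.symm
  have hdiv : ε / ω * hammingNorm (w + γ1 *ᵥ z) ≤
      (hammingNorm (dD1 *ᵥ u) + hammingNorm (w + γ1 *ᵥ u) : ℕ) := by
    rw [div_mul_eq_mul_div, div_le_iff₀ hω, mul_comm _ ω]
    exact_mod_cast hle
  calc ((ε / ω : ℝ≥0) : ℝ≥0∞) * systole dC1 dC2
      ≤ ((ε / ω : ℝ≥0) : ℝ≥0∞) * hammingNorm (w + γ1 *ᵥ z) := by gcongr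
    _ ≤ _ := by exact_mod_cast hdiv

end

theorem add_self_eq_zero_of_zmod_two {ι : Type*} (v : ι → ZMod 2) : v + v = 0 :=
  funext fun i => CharTwo.add_self_eq_zero (v i)

section TotalComplex

variable {D₀ D₁ C₀ C₁ C₂ : Type*} [Fintype D₀] [Fintype D₁] [Fintype C₁] [Fintype C₂]
  {dD1 : Matrix D₀ D₁ (ZMod 2)} {dC1 : Matrix C₀ C₁ (ZMod 2)} {dC2 : Matrix C₁ C₂ (ZMod 2)}
  {γ1 : Matrix C₁ D₁ (ZMod 2)} {γ0 : Matrix C₀ D₀ (ZMod 2)} {ε ω : ℝ≥0}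

theorem min_mul_systole_le_of_tot_cycle (hγ0 : γ0 * dD1 = dC1 * γ1)
    (hsurj : Function.Surjective dD1.mulVec)
    (hbγ1 : ∀ x, (hammingNorm (γ1 *ᵥ x) : ℝ≥0) ≤ ω * hammingNorm x)
    (hexp : ∀ u, dD1 *ᵥ u ≠ 0 →
        ε * ((sInf {k : ℕ | ∃ z, dD1 *ᵥ z = 0 ∧ hammingNorm (u + z) = k} : ℕ) : ℝ≥0) ≤
          (hammingNorm (dD1 *ᵥ u) : ℝ≥0))
    (hω : 0 < ω) (hεω : ε ≤ ω) {p₁ : D₀ → ZMod 2} {p₂ : C₁ → ZMod 2}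
    (hcycle : γ0 *ᵥ p₁ + dC1 *ᵥ p₂ = 0)
    (hnt : ¬∃ u b, p₁ = dD1 *ᵥ u ∧ p₂ = γ1 *ᵥ u + dC2 *ᵥ b) :
    min 1 ((ε / ω : ℝ≥0) : ℝ≥0∞) * systole dC1 dC2 ≤
      ((hammingNorm p₁ + hammingNorm p₂ : ℕ) : ℝ≥0∞) := by
  by_cases hp₁ : p₁ = 0
  · subst hp₁
    have hp₂ : dC1 *ᵥ p₂ = 0 := by simpa using hcycle
    have hsys := systole_le (dC2 := dC2) hp₂ fun ⟨x, hx⟩ => hnt ⟨0, x, by simp, by simp [hx]⟩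
    calc min 1 ((ε / ω : ℝ≥0) : ℝ≥0∞) * systole dC1 dC2 ≤ 1 * systole dC1 dC2 := by
          gcongr; exact min_le_left _ _
      _ ≤ ((hammingNorm (0 : D₀ → ZMod 2) + hammingNorm p₂ : ℕ) : ℝ≥0∞) := by simpa using hsys
  obtain ⟨u, rfl⟩ := hsurj p₁
  have hw : dC1 *ᵥ (p₂ + γ1 *ᵥ u) = 0 := by
    rw [mulVec_add, mulVec_mulVec, ← hγ0, ← mulVec_mulVec, add_comm, hcycle]
  have hwnt : ∀ z, dD1 *ᵥ z = 0 → ∀ x, p₂ + γ1 *ᵥ u + γ1 *ᵥ z ≠ dC2 *ᵥ x := by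
    refine fun z hz x h => hnt ⟨u + z, x, by rw [mulVec_add, hz, add_zero], ?_⟩
    calc p₂ = p₂ + γ1 *ᵥ (u + z) + γ1 *ᵥ (u + z) := by
          rw [add_assoc, add_self_eq_zero_of_zmod_two, add_zero]
      _ = γ1 *ᵥ (u + z) + dC2 *ᵥ x := by rw [← h, mulVec_add]; abel
  have hkey := div_mul_systole_le hγ0 hbγ1 hexp hω hεω hw hwnt hp₁
  rw [add_assoc, add_self_eq_zero_of_zmod_two, add_zero] at hkey
  calc min 1 ((ε / ω : ℝ≥0) : ℝ≥0∞) * systole dC1 dC2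
      ≤ ((ε / ω : ℝ≥0) : ℝ≥0∞) * systole dC1 dC2 := by gcongr; exact min_le_right _ _
    _ ≤ _ := hkey

end TotalComplex

theorem stmt8_general (d1 d0 c2 c1 c0 : ℕ) (ε ω : NNReal)
    (dD1 : Matrix (Fin d0) (Fin d1) (ZMod 2))
    (dC2 : Matrix (Fin c1) (Fin c2) (ZMod 2)) (dC1 : Matrix (Fin c0) (Fin c1) (ZMod 2))
    (γ1 : Matrix (Fin c1) (Fin d1) (ZMod 2)) (γ0 : Matrix (Fin c0) (Fin d0) (ZMod 2))
    (hC : dC1 * dC2 = 0) (hγ0 : γ0 * dD1 = dC1 * γ1)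
    (hsurj : Function.Surjective dD1.mulVec)
    -- ω-boundedness of γ₁
    (hbγ1 : ∀ x, (hammingNorm (γ1.mulVec x) : NNReal) ≤ ω * hammingNorm x)
    -- ε-systolic expansion of D₁
    (hexp : ∀ u : Fin d1 → ZMod 2, dD1.mulVec u ≠ 0 →
        ε * ((sInf {k : ℕ | ∃ z, dD1.mulVec z = 0 ∧ hammingNorm (u + z) = k} : ℕ) : NNReal) ≤
          (hammingNorm (dD1.mulVec u) : NNReal))
    (hεω : ε < ω)
    -- L' : a lift of a basis of H₁(C)/γ_*(H₁(D)) to 1-cycles of C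
    (L' : Submodule (ZMod 2) (Fin c1 → ZMod 2))
    (hL'cyc : ∀ v ∈ L', dC1.mulVec v = 0)
    (hL'nt : ∀ v ∈ L', v ≠ 0 →
        ¬∃ (z : Fin d1 → ZMod 2) (b : Fin c2 → ZMod 2),
          dD1.mulVec z = 0 ∧ v = γ1.mulVec z + dC2.mulVec b) :
    -- main inequality
    (∀ (L : Fin c1 → ZMod 2), L ∈ L' → L ≠ 0 →
      ∀ (b : Fin c2 → ZMod 2) (u : Fin d1 → ZMod 2), dD1.mulVec u ≠ 0 →
        ((ε / ω : NNReal) : ℝ≥0∞) *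
            sInf ((fun v => (hammingNorm v : ℝ≥0∞)) ''
              {v : Fin c1 → ZMod 2 | dC1.mulVec v = 0 ∧
                ¬∃ x : Fin c2 → ZMod 2, dC2.mulVec x = v}) ≤
          ((hammingNorm (dD1.mulVec u) +
            hammingNorm ((L + dC2.mulVec b) + γ1.mulVec u) : ℕ) : ℝ≥0∞)) ∧
    -- hence d_X(tot E) ≥ min(1, ε/ω) · d_X(C)
    (min 1 ((ε / ω : NNReal) : ℝ≥0∞)) *
        sInf ((fun v => (hammingNorm v : ℝ≥0∞)) ''
          {v : Fin c1 → ZMod 2 | dC1.mulVec v = 0 ∧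
            ¬∃ x : Fin c2 → ZMod 2, dC2.mulVec x = v}) ≤
      sInf ((fun p => ((hammingNorm p.1 + hammingNorm p.2 : ℕ) : ℝ≥0∞)) ''
        {p : (Fin d0 → ZMod 2) × (Fin c1 → ZMod 2) |
          γ0.mulVec p.1 + dC1.mulVec p.2 = 0 ∧
          ¬∃ (u : Fin d1 → ZMod 2) (b : Fin c2 → ZMod 2),
            p.1 = dD1.mulVec u ∧ p.2 = γ1.mulVec u + dC2.mulVec b}) := by
  have hω : 0 < ω := pos_of_gt hεω
  refine ⟨fun L hL hL0 b u hu => div_mul_systole_le hγ0 hbγ1 hexp hω hεω.le ?_ ?_ hu, ?_⟩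
  · rw [mulVec_add, hL'cyc L hL, mulVec_mulVec, hC, zero_mulVec, add_zero]
  · refine fun z hz x h => hL'nt L hL hL0 ⟨-z, x - b, by rw [mulVec_neg, hz, neg_zero], ?_⟩
    rw [mulVec_neg, mulVec_sub, ← h]
    abel
  · refine le_sInf ?_
    rintro _ ⟨⟨p₁, p₂⟩, ⟨hcycle, hnt⟩, rfl⟩
    exact min_mul_systole_le_of_tot_cycle hγ0 hsurj hbγ1 hexp hω hεω.le hcycle hnt

/-- Distance bound for fast surgery in the regime `0 < ε < ω`: for every
`w ∈ (L' \ {0}) + im ∂^C₂` and every `u ∈ D₁ \ ker ∂^D₁`,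
`‖w + (γ₁ + ∂^D₁)u‖ ≥ (ε/ω) · d_X(C)`; hence
`d_X(tot E) ≥ min(1, ε/ω) · d_X(C)`. -/
theorem stmt8 (d1 d0 c2 c1 c0 : ℕ) (ε ω : NNReal)
    (dD1 : Matrix (Fin d0) (Fin d1) (ZMod 2))
    (dC2 : Matrix (Fin c1) (Fin c2) (ZMod 2)) (dC1 : Matrix (Fin c0) (Fin c1) (ZMod 2))
    (γ1 : Matrix (Fin c1) (Fin d1) (ZMod 2)) (γ0 : Matrix (Fin c0) (Fin d0) (ZMod 2))
    (hC : dC1 * dC2 = 0) (hγ0 : γ0 * dD1 = dC1 * γ1)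
    (hsurj : Function.Surjective dD1.mulVec)
    -- ω-boundedness of γ₁
    (hbγ1 : ∀ x, (hammingNorm (γ1.mulVec x) : NNReal) ≤ ω * hammingNorm x)
    -- ε-systolic expansion of D₁
    (hexp : ∀ u : Fin d1 → ZMod 2, dD1.mulVec u ≠ 0 →
        ε * ((sInf {k : ℕ | ∃ z, dD1.mulVec z = 0 ∧ hammingNorm (u + z) = k} : ℕ) : NNReal) ≤
          (hammingNorm (dD1.mulVec u) : NNReal))
    (hε : 0 < ε) (hεω : ε < ω)
    -- L' : a lift of a basis of H₁(C)/γ_*(H₁(D)) to 1-cycles of C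
    (L' : Submodule (ZMod 2) (Fin c1 → ZMod 2))
    (hL'cyc : ∀ v ∈ L', dC1.mulVec v = 0)
    (hL'nt : ∀ v ∈ L', v ≠ 0 →
        ¬∃ (z : Fin d1 → ZMod 2) (b : Fin c2 → ZMod 2),
          dD1.mulVec z = 0 ∧ v = γ1.mulVec z + dC2.mulVec b)
    (hL'span : ∀ v : Fin c1 → ZMod 2, dC1.mulVec v = 0 →
        ∃ L ∈ L', ∃ (z : Fin d1 → ZMod 2) (b : Fin c2 → ZMod 2),
          dD1.mulVec z = 0 ∧ v + L = γ1.mulVec z + dC2.mulVec b) :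
    -- main inequality
    (∀ (L : Fin c1 → ZMod 2), L ∈ L' → L ≠ 0 →
      ∀ (b : Fin c2 → ZMod 2) (u : Fin d1 → ZMod 2), dD1.mulVec u ≠ 0 →
        ((ε / ω : NNReal) : ℝ≥0∞) *
            sInf ((fun v => (hammingNorm v : ℝ≥0∞)) ''
              {v : Fin c1 → ZMod 2 | dC1.mulVec v = 0 ∧
                ¬∃ x : Fin c2 → ZMod 2, dC2.mulVec x = v}) ≤
          ((hammingNorm (dD1.mulVec u) +
            hammingNorm ((L + dC2.mulVec b) + γ1.mulVec u) : ℕ) : ℝ≥0∞)) ∧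
    -- hence d_X(tot E) ≥ min(1, ε/ω) · d_X(C)
    (min 1 ((ε / ω : NNReal) : ℝ≥0∞)) *
        sInf ((fun v => (hammingNorm v : ℝ≥0∞)) ''
          {v : Fin c1 → ZMod 2 | dC1.mulVec v = 0 ∧
            ¬∃ x : Fin c2 → ZMod 2, dC2.mulVec x = v}) ≤
      sInf ((fun p => ((hammingNorm p.1 + hammingNorm p.2 : ℕ) : ℝ≥0∞)) ''
        {p : (Fin d0 → ZMod 2) × (Fin c1 → ZMod 2) |
          γ0.mulVec p.1 + dC1.mulVec p.2 = 0 ∧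
          ¬∃ (u : Fin d1 → ZMod 2) (b : Fin c2 → ZMod 2),
            p.1 = dD1.mulVec u ∧ p.2 = γ1.mulVec u + dC2.mulVec b}) :=
  stmt8_general d1 d0 c2 c1 c0 ε ω dD1 dC2 dC1 γ1 γ0 hC hγ0 hsurj hbγ1 hexp hεω L' hL'cyc hL'nt
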